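/- arXiv:0910.2401 — 9 statements merged into one kernel-verified Lean document; each statement's English description precedes it below -/
import Mathlib

section
/- Let C be a cartesian closed category with a dualizing object ⊥, i.e. an object ⊥ such that for every object A the canonical morphism A ⟶ ((A ⇨ ⊥) ⇨ ⊥) (the transpose under the exponential adjunction of the evaluation morphism (A ⇨ ⊥) ⨯ A ⟶ ⊥) is an isomorphism. Then C is a preorder: for all objects A, B and all morphisms f, g : A ⟶ B we have f = g. (Joyal's Lemma) -/
open CategoryTheory CategoryTheory.Limits MonoidalCategory CartesianClosed

universe v u

/-!
Write `¬X` for `X ⟹ ⊥`. Since `X ≅ ¬¬X`, the symmetry `(X ⟶ ¬Y) ≃ (Y ⟶ ¬X)` of currying gives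
`(¬1 ⟶ Y) ≃ (¬Y ⟶ 1)`, so `¬1 ≅ ⊥` is initial. Initial objects of a cartesian closed category
are strict, so there is at most one morphism into `⊥`, hence into every `¬X`, hence into every
object `A ≅ ¬¬A`.
-/

namespace CategoryTheory.MonoidalClosed

section Braided

variable {C : Type u} [Category.{v} C] [MonoidalCategory C] [BraidedCategory C] [MonoidalClosed C]

def toDoubleDual (D A : C) : A ⟶ (A ⟹ D) ⟹ D :=
  curry ((β_ (A ⟹ D) A).hom ≫ (ihom.ev A).app D)

def IsDualizing (D : C) : Prop :=
  ∀ A : C, IsIso (toDoubleDual D A)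

def homIhomSwap (D A B : C) : (A ⟶ B ⟹ D) ≃ (B ⟶ A ⟹ D) :=
  ((ihom.adjunction B).homEquiv A D).symm.trans <|
    ((β_ A B).homCongr (Iso.refl D)).symm.trans ((ihom.adjunction A).homEquiv B D)

variable {D : C}

noncomputable def IsDualizing.homEquiv (hD : IsDualizing D) (X Y : C) :
    ((X ⟹ D) ⟶ Y) ≃ ((Y ⟹ D) ⟶ X) :=
  haveI := hD X
  haveI := hD Y
  calc ((X ⟹ D) ⟶ Y)
      ≃ ((X ⟹ D) ⟶ (Y ⟹ D) ⟹ D) := (Iso.refl _).homCongr (asIso (toDoubleDual D Y))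
    _ ≃ ((Y ⟹ D) ⟶ (X ⟹ D) ⟹ D) := homIhomSwap D _ _
    _ ≃ ((Y ⟹ D) ⟶ X) := (Iso.refl _).homCongr (asIso (toDoubleDual D X)).symm

theorem IsDualizing.subsingleton_hom (hD : IsDualizing D)
    (hsub : ∀ Z : C, Subsingleton (Z ⟶ D)) (Z A : C) :
    Subsingleton (Z ⟶ A) := by
  have := hD A
  have hdual : Subsingleton (Z ⟶ (A ⟹ D) ⟹ D) :=
    ((ihom.adjunction (A ⟹ D)).homEquiv Z D).symm.subsingleton
  exact ⟨fun f g => (cancel_mono (toDoubleDual D A)).1 (Subsingleton.elim _ _)⟩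

end Braided

section Cartesian

variable {C : Type u} [Category.{v} C] [CartesianMonoidalCategory C] [MonoidalClosed C]

theorem subsingleton_hom_of_isInitial {I : C} (t : IsInitial I) (Z : C) :
    Subsingleton (Z ⟶ I) :=
  ⟨fun u v => have := strict_initial t u; (t.ofIso (asIso u).symm).hom_ext u v⟩

noncomputable def IsDualizing.isInitial [BraidedCategory C] {D : C} (hD : IsDualizing D) :
    IsInitial D :=
  haveI (Y : C) : Unique ((𝟙_ C ⟹ D) ⟶ Y) := (hD.homEquiv (𝟙_ C) Y).unique
  (IsInitial.ofUnique (𝟙_ C ⟹ D)).ofIso (unitNatIso.app D).symm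

end Cartesian

end CategoryTheory.MonoidalClosed

open MonoidalClosed in
/-- **Joyal's Lemma.** A cartesian closed category with a dualizing object `bot`
(i.e. the canonical morphism `A ⟶ ((A ⇨ bot) ⇨ bot)`, obtained by currying the
evaluation morphism composed with the symmetry of the product, is an isomorphism
for every `A`) is a preorder: any two parallel morphisms are equal. -/
theorem joyal_lemma (C : Type u) [Category.{v} C] [CartesianMonoidalCategory C] [MonoidalClosed C]
    (bot : C)
    (dualizing : ∀ A : C,
      letI : BraidedCategory C := .ofCartesianMonoidalCategory
      IsIso (MonoidalClosed.curry ((β_ (A ⟹ bot) A).hom ≫ (ihom.ev A).app bot)))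
    {A B : C} (f g : A ⟶ B) : f = g := by
  let : BraidedCategory C := .ofCartesianMonoidalCategory
  have hD : IsDualizing bot := dualizing
  have := hD.subsingleton_hom (subsingleton_hom_of_isInitial hD.isInitial) A B
  exact Subsingleton.elim f g
end

section
/- Let C be a cartesian closed category and ⊥ a dualizing object of C, i.e. for every object A the canonical morphism A ⟶ ((A ⇨ ⊥) ⇨ ⊥) is an isomorphism. Then the contravariant functor A ↦ (A ⇨ ⊥) is an equivalence between C and its opposite category Cᵒᵖ. -/
open CategoryTheory CategoryTheory.Limits MonoidalCategory
open scoped CategoryTheory.CartesianClosed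

attribute [local instance] CategoryTheory.BraidedCategory.ofCartesianMonoidalCategory

universe v u

/-- The contravariant "negation" functor `A ↦ (A ⇨ bot)` of a cartesian closed
category, regarded as a (covariant) functor `C ⥤ Cᵒᵖ`.  On morphisms it acts by
precomposition under the exponential adjunction. -/
noncomputable def negationFunctor (C : Type u) [Category.{v} C] [CartesianMonoidalCategory C]
    [MonoidalClosed C] (bot : C) : C ⥤ Cᵒᵖ where
  obj A := Opposite.op (A ⟹ bot)
  map f := ((MonoidalClosed.pre f).app bot).op
  map_id A := by simp
  map_comp f g := by simp

/-!
The canonical morphisms `A ⟶ (A ⇨ bot) ⇨ bot` are natural in `A` in any braided monoidal closed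
category. When they are invertible they form the unit of an equivalence whose inverse is negation
again, viewed as a functor `Cᵒᵖ ⥤ C`; read in `Cᵒᵖ`, the same isomorphisms form its counit.
-/

namespace CategoryTheory.MonoidalClosed

section Braided

variable {C : Type*} [Category C] [MonoidalCategory C] [BraidedCategory C] [MonoidalClosed C]
  (bot : C)

noncomputable def toDoubleNegation (A : C) : A ⟶ (A ⟹ bot) ⟹ bot :=
  curry ((β_ (A ⟹ bot) A).hom ≫ (ihom.ev A).app bot)

theorem toDoubleNegation_naturality {A B : C} (f : A ⟶ B) :
    f ≫ toDoubleNegation bot B =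
      toDoubleNegation bot A ≫ (pre ((pre f).app bot)).app bot := by
  apply uncurry_injective
  rw [uncurry_natural_left, uncurry_natural_left, uncurry_pre, toDoubleNegation,
    toDoubleNegation, uncurry_curry, whisker_exchange_assoc, ← uncurry_eq, uncurry_curry,
    BraidedCategory.braiding_naturality_right_assoc,
    BraidedCategory.braiding_naturality_left_assoc, id_tensor_pre_app_comp_ev]

end Braided

section Cartesian

variable {C : Type u} [Category.{v} C] [CartesianMonoidalCategory C] [MonoidalClosed C]
  (bot : C)

noncomputable def doubleNegationIso [∀ A : C, IsIso (toDoubleNegation bot A)] :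
    𝟭 C ≅ negationFunctor C bot ⋙ (negationFunctor C bot).leftOp :=
  -- without the ascription the instance is sought for `toDoubleNegation bot ((𝟭 C).obj A)`
  NatIso.ofComponents (fun A => (asIso (toDoubleNegation bot A) : A ≅ _))
    (toDoubleNegation_naturality bot)

noncomputable def negationEquivalence [∀ A : C, IsIso (toDoubleNegation bot A)] : C ≌ Cᵒᵖ :=
  Equivalence.mk (negationFunctor C bot) (negationFunctor C bot).leftOp
    (doubleNegationIso bot) (NatIso.op (doubleNegationIso bot))

end Cartesian

end CategoryTheory.MonoidalClosed

/-- If `bot` is a dualizing object of a cartesian closed category `C`, then the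
negation functor `A ↦ (A ⇨ bot)` is an equivalence between `C` and `Cᵒᵖ`. -/
theorem negationFunctor_isEquivalence (C : Type u) [Category.{v} C] [CartesianMonoidalCategory C]
    [MonoidalClosed C] (bot : C)
    (dualizing : ∀ A : C,
      IsIso (MonoidalClosed.curry ((β_ (A ⟹ bot) A).hom ≫ (ihom.ev A).app bot))) :
    (negationFunctor C bot).IsEquivalence :=
  have : ∀ A : C, IsIso (MonoidalClosed.toDoubleNegation bot A) := dualizing
  (MonoidalClosed.negationEquivalence bot).isEquivalence_functor
end

section
/- Let C be a category with chosen finite products, regarded as a symmetric monoidal category with tensor the binary product and unit the terminal object. If this monoidal category is compact closed (every object A has a dual Aᘁ with coevaluation η_A : I ⟶ A ⊗ Aᘁ and evaluation ε_A : Aᘁ ⊗ A ⟶ I satisfying the triangle identities), then C is a preorder: for all objects A, B and all morphisms f, g : A ⟶ B we have f = g. -/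
/-!
Projecting the zig-zag `X ⟶ (X ⊗ Xᘁ) ⊗ X ⟶ X ⊗ (Xᘁ ⊗ X) ⟶ X` onto its first factor forgets
the evaluation, so `𝟙 X` factors through the terminal object as `toUnit X ≫ η ≫ fst`.
An object whose identity factors through the terminal object admits at most one morphism
from any object.
-/

open CategoryTheory CategoryTheory.Limits MonoidalCategory CartesianMonoidalCategory

universe v u

section

variable {C : Type u} [Category.{v} C] [CartesianMonoidalCategory C]

lemma hom_ext_of_id_eq_toUnit_comp {X : C} (p : 𝟙_ C ⟶ X) (hp : 𝟙 X = toUnit X ≫ p)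
    {A : C} (f g : A ⟶ X) : f = g := by
  rw [← Category.comp_id f, ← Category.comp_id g, hp, ← Category.assoc, ← Category.assoc,
    toUnit_unique (f ≫ toUnit X) (g ≫ toUnit X)]

lemma ExactPairing.id_eq_toUnit_comp_coevaluation_fst (X Y : C) [ExactPairing X Y] :
    𝟙 X = toUnit X ≫ η_ X Y ≫ fst X Y :=
  calc 𝟙 X = (λ_ X).inv ≫ ((λ_ X).hom ≫ (ρ_ X).inv) ≫ fst X (𝟙_ C) := by simp
    _ = (λ_ X).inv ≫ (η_ X Y ▷ X ≫ (α_ X Y X).hom ≫ X ◁ ε_ X Y) ≫ fst X (𝟙_ C) := by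
      rw [ExactPairing.evaluation_coevaluation]
    _ = ((λ_ X).inv ≫ fst (𝟙_ C) X) ≫ η_ X Y ≫ fst X Y := by
      simp only [Category.assoc, whiskerLeft_fst, associator_hom_fst, whiskerRight_fst_assoc]
    _ = toUnit X ≫ η_ X Y ≫ fst X Y := by rw [toUnit_unique ((λ_ X).inv ≫ fst (𝟙_ C) X)]

end

/-- If a category with chosen finite products, regarded as a symmetric monoidal
category with tensor the binary product and unit the terminal object, is compact
closed (every object has a right dual, i.e. a coevaluation `η_A : I ⟶ A ⊗ Aᘁ` and an
evaluation `ε_A : Aᘁ ⊗ A ⟶ I` satisfying the triangle identities), then the category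
is a preorder: any two parallel morphisms are equal. -/
theorem cartesian_compact_closed_preorder (C : Type u) [Category.{v} C]
    [CartesianMonoidalCategory C] [RightRigidCategory C]
    {A B : C} (f g : A ⟶ B) : f = g :=
  hom_ext_of_id_eq_toUnit_comp _ (ExactPairing.id_eq_toUnit_comp_coevaluation_fst B Bᘁ) f g
end

section
/- Let C be a symmetric monoidal category equipped with natural transformations Δ_A : A ⟶ A ⊗ A, p_{A,B} : A ⊗ B ⟶ A, q_{A,B} : A ⊗ B ⟶ B (natural in all variables) such that for every object A, Δ_A ≫ p_{A,A} = 𝟙_A and Δ_A ≫ q_{A,A} = 𝟙_A, and for all objects A, B, Δ_{A⊗B} ≫ (p_{A,B} ⊗ q_{A,B}) = 𝟙_{A⊗B}. Then for all objects A, B, the object A ⊗ B together with the projections p_{A,B} and q_{A,B} is a categorical binary product of A and B. -/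
/-!
The mediating morphism of `f : X ⟶ A` and `g : X ⟶ B` is `Δ X ≫ (f ⊗ g)`. Uniqueness holds
because, by naturality of `Δ` and `Δ ≫ (p ⊗ q) = 𝟙`, every `m : X ⟶ A ⊗ B` equals
`Δ X ≫ ((m ≫ p) ⊗ (m ≫ q))`.
-/

open CategoryTheory CategoryTheory.Limits MonoidalCategory

universe v u

section

variable {C : Type u} [Category.{v} C] [MonoidalCategory C] (Δ : ∀ A : C, A ⟶ A ⊗ A)
  (p : ∀ A B : C, A ⊗ B ⟶ A) (q : ∀ A B : C, A ⊗ B ⟶ B)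

lemma diag_comp_tensorHom_comp_fst
    (p_nat : ∀ {A A' B B' : C} (f : A ⟶ A') (g : B ⟶ B'), (f ⊗ₘ g) ≫ p A' B' = p A B ≫ f)
    (hp : ∀ A : C, Δ A ≫ p A A = 𝟙 A) {X A B : C} (f : X ⟶ A) (g : X ⟶ B) :
    Δ X ≫ (f ⊗ₘ g) ≫ p A B = f := by
  rw [p_nat, ← Category.assoc, hp, Category.id_comp]

lemma diag_comp_tensorHom_comp_snd
    (q_nat : ∀ {A A' B B' : C} (f : A ⟶ A') (g : B ⟶ B'), (f ⊗ₘ g) ≫ q A' B' = q A B ≫ g)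
    (hq : ∀ A : C, Δ A ≫ q A A = 𝟙 A) {X A B : C} (f : X ⟶ A) (g : X ⟶ B) :
    Δ X ≫ (f ⊗ₘ g) ≫ q A B = g := by
  rw [q_nat, ← Category.assoc, hq, Category.id_comp]

lemma eq_diag_comp_tensorHom
    (Δ_nat : ∀ {A B : C} (f : A ⟶ B), f ≫ Δ B = Δ A ≫ (f ⊗ₘ f))
    (hpq : ∀ A B : C, Δ (A ⊗ B) ≫ (p A B ⊗ₘ q A B) = 𝟙 (A ⊗ B)) {X A B : C}
    (m : X ⟶ A ⊗ B) : m = Δ X ≫ ((m ≫ p A B) ⊗ₘ (m ≫ q A B)) :=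
  calc m = m ≫ Δ (A ⊗ B) ≫ (p A B ⊗ₘ q A B) := by rw [hpq, Category.comp_id]
    _ = Δ X ≫ (m ⊗ₘ m) ≫ (p A B ⊗ₘ q A B) := by rw [← Category.assoc, Δ_nat, Category.assoc]
    _ = Δ X ≫ ((m ≫ p A B) ⊗ₘ (m ≫ q A B)) := by rw [tensorHom_comp_tensorHom]

end

theorem tensor_isBinaryProduct_general (C : Type u) [Category.{v} C] [MonoidalCategory C]
    (Δ : ∀ A : C, A ⟶ A ⊗ A)
    (p : ∀ A B : C, A ⊗ B ⟶ A) (q : ∀ A B : C, A ⊗ B ⟶ B)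
    (Δ_nat : ∀ {A B : C} (f : A ⟶ B), f ≫ Δ B = Δ A ≫ (f ⊗ₘ f))
    (p_nat : ∀ {A A' B B' : C} (f : A ⟶ A') (g : B ⟶ B'),
      (f ⊗ₘ g) ≫ p A' B' = p A B ≫ f)
    (q_nat : ∀ {A A' B B' : C} (f : A ⟶ A') (g : B ⟶ B'),
      (f ⊗ₘ g) ≫ q A' B' = q A B ≫ g)
    (hp : ∀ A : C, Δ A ≫ p A A = 𝟙 A)
    (hq : ∀ A : C, Δ A ≫ q A A = 𝟙 A)
    (hpq : ∀ A B : C, Δ (A ⊗ B) ≫ (p A B ⊗ₘ q A B) = 𝟙 (A ⊗ B))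
    (A B : C) :
    Nonempty (IsLimit (BinaryFan.mk (p A B) (q A B))) :=
  ⟨BinaryFan.isLimitMk (fun s => Δ s.pt ≫ (s.fst ⊗ₘ s.snd))
    (fun s => (Category.assoc _ _ _).trans
      (diag_comp_tensorHom_comp_fst Δ p p_nat hp s.fst s.snd))
    (fun s => (Category.assoc _ _ _).trans
      (diag_comp_tensorHom_comp_snd Δ q q_nat hq s.fst s.snd))
    (fun s m h_fst h_snd => by
      rw [eq_diag_comp_tensorHom Δ p q Δ_nat hpq m, h_fst, h_snd])⟩

/-- In a symmetric monoidal category equipped with natural diagonals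
`Δ_A : A ⟶ A ⊗ A` and natural projections `p_{A,B} : A ⊗ B ⟶ A`,
`q_{A,B} : A ⊗ B ⟶ B` satisfying `Δ_A ≫ p_{A,A} = 𝟙_A`, `Δ_A ≫ q_{A,A} = 𝟙_A`
and `Δ_{A⊗B} ≫ (p_{A,B} ⊗ q_{A,B}) = 𝟙_{A⊗B}`, the tensor `A ⊗ B` together with
`p_{A,B}` and `q_{A,B}` is a categorical binary product of `A` and `B`. -/
theorem tensor_isBinaryProduct (C : Type u) [Category.{v} C] [MonoidalCategory C]
    [SymmetricCategory C]
    (Δ : ∀ A : C, A ⟶ A ⊗ A)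
    (p : ∀ A B : C, A ⊗ B ⟶ A) (q : ∀ A B : C, A ⊗ B ⟶ B)
    (Δ_nat : ∀ {A B : C} (f : A ⟶ B), f ≫ Δ B = Δ A ≫ (f ⊗ₘ f))
    (p_nat : ∀ {A A' B B' : C} (f : A ⟶ A') (g : B ⟶ B'),
      (f ⊗ₘ g) ≫ p A' B' = p A B ≫ f)
    (q_nat : ∀ {A A' B B' : C} (f : A ⟶ A') (g : B ⟶ B'),
      (f ⊗ₘ g) ≫ q A' B' = q A B ≫ g)
    (hp : ∀ A : C, Δ A ≫ p A A = 𝟙 A)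
    (hq : ∀ A : C, Δ A ≫ q A A = 𝟙 A)
    (hpq : ∀ A B : C, Δ (A ⊗ B) ≫ (p A B ⊗ₘ q A B) = 𝟙 (A ⊗ B))
    (A B : C) :
    Nonempty (IsLimit (BinaryFan.mk (p A B) (q A B))) :=
  tensor_isBinaryProduct_general C Δ p q Δ_nat p_nat q_nat hp hq hpq A B
end

section
/- Let C be a symmetric monoidal category with uniform cloning Δ. Then composition of scalars is idempotent: for every scalar s : I ⟶ I, s ≫ s = s. -/
open CategoryTheory MonoidalCategory

universe v u

/-- A *uniform cloning* operation on a symmetric monoidal category: a monoidal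
natural transformation `Δ` from the identity functor to the functor `A ↦ A ⊗ A`
which is coassociative and cocommutative. -/
structure UniformCloning (C : Type u) [Category.{v} C] [MonoidalCategory C]
    [SymmetricCategory C] where
  /-- The components `Δ_A : A ⟶ A ⊗ A`. -/
  Δ : ∀ A : C, A ⟶ A ⊗ A
  /-- Naturality: `f ≫ Δ_B = Δ_A ≫ (f ⊗ f)`. -/
  naturality : ∀ {A B : C} (f : A ⟶ B), f ≫ Δ B = Δ A ≫ (f ⊗ₘ f)
  /-- Monoidality at the unit: `Δ_I = λ_I⁻¹`. -/
  unit : Δ (𝟙_ C) = (λ_ (𝟙_ C)).inv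
  /-- Monoidality at tensor products: `Δ_{A⊗B}` is `Δ_A ⊗ Δ_B` followed by the
  middle-interchange isomorphism built from associators and the symmetry. -/
  tensor : ∀ A B : C, Δ (A ⊗ B) = (Δ A ⊗ₘ Δ B) ≫ tensorμ A A B B
  /-- Coassociativity (up to the associator). -/
  coassoc : ∀ A : C, Δ A ≫ (𝟙 A ⊗ₘ Δ A) = Δ A ≫ (Δ A ⊗ₘ 𝟙 A) ≫ (α_ A A A).hom
  /-- Cocommutativity: `Δ_A ≫ σ_{A,A} = Δ_A`. -/
  cocomm : ∀ A : C, Δ A ≫ (β_ A A).hom = Δ A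

section

variable {C : Type u} [Category.{v} C] [MonoidalCategory C]

theorem leftUnitor_inv_comp_tensorHom_comp_leftUnitor_hom (s t : 𝟙_ C ⟶ 𝟙_ C) :
    (λ_ (𝟙_ C)).inv ≫ (s ⊗ₘ t) ≫ (λ_ (𝟙_ C)).hom = s ≫ t := by
  simp [MonoidalCategory.tensorHom_def, unitors_equal, unitors_inv_equal]

variable [SymmetricCategory C]

theorem UniformCloning.eq_leftUnitor_inv_comp_tensorHom_self (cloning : UniformCloning C)
    (s : 𝟙_ C ⟶ 𝟙_ C) : s = (λ_ (𝟙_ C)).inv ≫ (s ⊗ₘ s) ≫ (λ_ (𝟙_ C)).hom := by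
  rw [← Category.assoc, ← cloning.unit, ← cloning.naturality, cloning.unit, Category.assoc,
    Iso.inv_hom_id, Category.comp_id]

end

/-- In a symmetric monoidal category with uniform cloning, composition of scalars
is idempotent: `s ≫ s = s` for every scalar `s : I ⟶ I`. -/
theorem scalars_idempotent_of_cloning (C : Type u) [Category.{v} C] [MonoidalCategory C]
    [SymmetricCategory C] (cloning : UniformCloning C)
    (s : 𝟙_ C ⟶ 𝟙_ C) : s ≫ s = s :=
  calc s ≫ s = (λ_ (𝟙_ C)).inv ≫ (s ⊗ₘ s) ≫ (λ_ (𝟙_ C)).hom :=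
        (leftUnitor_inv_comp_tensorHom_comp_leftUnitor_hom s s).symm
    _ = s := (cloning.eq_leftUnitor_inv_comp_tensorHom_self s).symm
end

section
/- Let C be a symmetric monoidal category with uniform cloning Δ. Then for every morphism u : I ⟶ A ⊗ B, the morphism u ⊗ u : I ⊗ I ⟶ (A ⊗ B) ⊗ (A ⊗ B) satisfies u ⊗ u = (u ⊗ u) ≫ P, where P : (A ⊗ B) ⊗ (A ⊗ B) ⟶ (A ⊗ B) ⊗ (A ⊗ B) is the permutation isomorphism, built from associators and symmetries, that exchanges the first and third tensor factors of A ⊗ B ⊗ A ⊗ B (the permutation (3 2 1 4)). -/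
open CategoryTheory MonoidalCategory

universe v u

/-!
Naturality of `Δ` at `u : 𝟙_ C ⟶ A ⊗ B`, together with `Δ_I = λ_I⁻¹`, exhibits `u ⊗ u` as `u`
followed by `Δ_{A ⊗ B} = (Δ_A ⊗ Δ_B) ≫ μ`. In a symmetric category `μ` is its own inverse up to
relabelling, so the permutation in question is `μ⁻¹ ≫ (σ_{A,A} ⊗ 𝟙) ≫ μ`, and after cancelling
`μ ≫ μ⁻¹` the symmetry `σ_{A,A}` is absorbed into `Δ_A` by cocommutativity.
-/

lemma SymmetricCategory.tensorμ_eq_tensorδ {C : Type u} [Category.{v} C] [MonoidalCategory C]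
    [SymmetricCategory C] (W X Y Z : C) :
    tensorμ W X Y Z = tensorδ W Y X Z := by
  simp [tensorμ, tensorδ, ← SymmetricCategory.braiding_swap_eq_inv_braiding]

lemma SymmetricCategory.tensorμ_comp_tensorμ {C : Type u} [Category.{v} C] [MonoidalCategory C]
    [SymmetricCategory C] (W X Y Z : C) :
    tensorμ W X Y Z ≫ tensorμ W Y X Z = 𝟙 _ := by
  rw [tensorμ_eq_tensorδ, tensorδ_tensorμ]

namespace UniformCloning

variable {C : Type u} [Category.{v} C] [MonoidalCategory C] [SymmetricCategory C]
  (cloning : UniformCloning C)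

lemma tensorHom_self_of_unit {X : C} (u : 𝟙_ C ⟶ X) :
    u ⊗ₘ u = (λ_ (𝟙_ C)).hom ≫ u ≫ cloning.Δ X := by
  rw [cloning.naturality, cloning.unit, Iso.hom_inv_id_assoc]

lemma Δ_tensor_comp_swap (A B : C) :
    cloning.Δ (A ⊗ B) ≫ tensorμ A B A B ≫ ((β_ A A).hom ⊗ₘ 𝟙 (B ⊗ B)) ≫ tensorμ A A B B =
      cloning.Δ (A ⊗ B) := by
  rw [cloning.tensor, Category.assoc, reassoc_of% SymmetricCategory.tensorμ_comp_tensorμ,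
    tensorHom_comp_tensorHom_assoc, cloning.cocomm, Category.comp_id]

end UniformCloning

/-- In a symmetric monoidal category with uniform cloning, for every morphism
`u : I ⟶ A ⊗ B` we have "parallel caps = crossed caps": `u ⊗ u` is unchanged by
the permutation isomorphism, built from associators and symmetries, exchanging
the first and third tensor factors of `A ⊗ B ⊗ A ⊗ B` (the permutation (3 2 1 4)). -/
theorem tensor_self_symm_of_cloning (C : Type u) [Category.{v} C] [MonoidalCategory C]
    [SymmetricCategory C] (cloning : UniformCloning C)
    {A B : C} (u : 𝟙_ C ⟶ A ⊗ B) :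
    u ⊗ₘ u = (u ⊗ₘ u) ≫
      (tensorμ A B A B ≫ ((β_ A A).hom ⊗ₘ 𝟙 (B ⊗ B)) ≫ tensorμ A A B B) := by
  simp only [cloning.tensorHom_self_of_unit, Category.assoc, cloning.Δ_tensor_comp_swap]
end

section
/- Let C be a compact closed category with uniform cloning Δ. Then for every object A the twist map equals the identity: σ_{A,A} = 𝟙_{A⊗A}, where σ is the symmetry of the monoidal structure. -/
open CategoryTheory MonoidalCategory

universe v u

/-!
Naturality of `Δ` at the coevaluation `η : 𝟙 ⟶ A ⊗ Aᘁ`, together with monoidality, shows that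
`η ≫ (Δ_A ⊗ Δ_Aᘁ)` is the pair of parallel cups `η ⊗ η` regrouped by the middle interchange.
By cocommutativity this state is invariant under twisting its two `A`-outputs. Uncrossing the
two `Aᘁ`-outputs turns the parallel cups into the coevaluation of `A ⊗ A`, and a morphism
`f : A ⊗ A ⟶ A ⊗ A` is determined by the coevaluation followed by `f` (bend the wires back with
the evaluation), so the twist is the identity.
-/

section Rigid

open BraidedCategory

variable {C : Type u} [Category.{v} C] [MonoidalCategory C]

theorem coevaluation_comp_whiskerRight_injective {Y Y' Z : C} [ExactPairing Y Y'] :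
    Function.Injective fun f : Y ⟶ Z => η_ Y Y' ≫ f ▷ Y' := by
  intro f g h
  have := congrArg (tensorRightHomEquiv _ Y Y' Z).symm h
  simpa only [tensorRightHomEquiv_symm_coevaluation_comp_whiskerRight, cancel_epi] using this

theorem tensor_coevaluation_eq_tensorδ [BraidedCategory C] (X X' Y Y' : C)
    [ExactPairing X X'] [ExactPairing Y Y'] :
    η_ (X ⊗ Y) (Y' ⊗ X') =
      (λ_ _).inv ≫ (η_ X X' ⊗ₘ η_ Y Y') ≫ tensorδ X Y X' Y' ≫ (X ⊗ Y) ◁ (β_ Y' X').inv := by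
  rw [Iso.eq_inv_comp]
  calc
    _ = η_ X X' ▷ _ ⊗≫ X ◁ ((ρ_ X').hom ≫ (λ_ X').inv ≫ η_ Y Y' ▷ X') ⊗≫ 𝟙 _ := by
      rw [ExactPairing.tensor_coevaluation]
      monoidal
    _ = η_ X X' ▷ _ ⊗≫ X ◁ (X' ◁ η_ Y Y' ≫ (β_ (Y ⊗ Y') X').inv) ⊗≫ 𝟙 _ := by
      rw [braiding_inv_naturality_right, braiding_inv_tensorUnit_left, Category.assoc]
    _ = _ := by
      rw [braiding_tensor_left_inv, tensorδ, MonoidalCategory.tensorHom_def]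
      monoidal

end Rigid

namespace UniformCloning

variable {C : Type u} [Category.{v} C] [MonoidalCategory C] [SymmetricCategory C]

theorem leftUnitor_inv_comp_tensorHom_comp_tensorδ (cloning : UniformCloning C) {X Y : C}
    (f : 𝟙_ C ⟶ X ⊗ Y) :
    (λ_ _).inv ≫ (f ⊗ₘ f) ≫ tensorδ X X Y Y = f ≫ (cloning.Δ X ⊗ₘ cloning.Δ Y) := by
  have h := cloning.naturality f
  rw [cloning.tensor, cloning.unit] at h
  rw [← Category.assoc, ← h]
  simp only [Category.assoc, tensorμ_tensorδ, Category.comp_id]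

theorem tensorHom_comp_tensorδ_comp_braiding_whiskerRight (cloning : UniformCloning C) {X Y : C}
    (f : 𝟙_ C ⟶ X ⊗ Y) :
    (f ⊗ₘ f) ≫ tensorδ X X Y Y ≫ (β_ X X).hom ▷ (Y ⊗ Y) = (f ⊗ₘ f) ≫ tensorδ X X Y Y := by
  rw [← cancel_epi (λ_ (𝟙_ C)).inv, ← Category.assoc (f ⊗ₘ f), ← Category.assoc,
    cloning.leftUnitor_inv_comp_tensorHom_comp_tensorδ, Category.assoc,
    tensorHom_comp_whiskerRight, cloning.cocomm]

end UniformCloning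

/-- In a compact closed category (a symmetric monoidal category in which every
object has a right dual with coevaluation and evaluation satisfying the triangle
identities) with uniform cloning, the twist map equals the identity:
`σ_{A,A} = 𝟙_{A⊗A}`. -/
theorem twist_eq_id_of_cloning (C : Type u) [Category.{v} C] [MonoidalCategory C]
    [SymmetricCategory C] [RightRigidCategory C] (cloning : UniformCloning C)
    (A : C) : (β_ A A).hom = 𝟙 (A ⊗ A) := by
  have h := cloning.tensorHom_comp_tensorδ_comp_braiding_whiskerRight (η_ A Aᘁ)
  apply coevaluation_comp_whiskerRight_injective (Y' := Aᘁ ⊗ Aᘁ)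
  dsimp only
  rw [tensor_coevaluation_eq_tensorδ]
  simp only [Category.assoc, MonoidalCategory.id_whiskerRight, Category.comp_id]
  rw [whisker_exchange, reassoc_of% h]
end

section
/- Let C be a compact closed category with uniform cloning Δ. Then every endomorphism is a scalar multiple of the identity: for every object A and every f : A ⟶ A, f = Tr(f) • 𝟙_A, where Tr(f) : I ⟶ I is the categorical trace of f and s • 𝟙_A := λ_A⁻¹ ≫ (s ⊗ 𝟙_A) ≫ λ_A. Consequently, for every object A, the hom-set C(A,A) is a retract of the scalar monoid C(I,I): the map s ↦ s • 𝟙_A followed by the map f ↦ Tr(f) need not be considered, but the composite C(A,A) ⟶ C(I,I) ⟶ C(A,A), f ↦ Tr(f) ↦ Tr(f) • 𝟙_A, is the identity on C(A,A). (Cloning Collapse Theorem) -/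
open CategoryTheory MonoidalCategory

universe v u

variable {C : Type u} [Category.{v} C] [MonoidalCategory C] [SymmetricCategory C]
  [RightRigidCategory C]

/-- The categorical trace of an endomorphism `f : A ⟶ A` in a compact closed
category: `Tr(f) = η_A ≫ (f ⊗ 𝟙_{Aᘁ}) ≫ σ_{A,Aᘁ} ≫ ε_A : I ⟶ I`. -/
noncomputable def catTrace {A : C} (f : A ⟶ A) : 𝟙_ C ⟶ 𝟙_ C :=
  η_ A Aᘁ ≫ (f ⊗ₘ 𝟙 Aᘁ) ≫ (β_ A Aᘁ).hom ≫ ε_ A Aᘁ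

/-- The scalar multiple `s • f` of a morphism `f : A ⟶ B` by a scalar
`s : I ⟶ I`, namely `(λ_A⁻¹ ≫ (s ⊗ 𝟙_A) ≫ λ_A) ≫ f`. -/
def scalarSmul (s : 𝟙_ C ⟶ 𝟙_ C) {A B : C} (f : A ⟶ B) : A ⟶ B :=
  ((λ_ A).inv ≫ (s ⊗ₘ 𝟙 A) ≫ (λ_ A).hom) ≫ f

/-!
Cloning `η_A` with `Δ` (naturality, then monoidality at `I` and at `A ⊗ Aᘁ`) and using
cocommutativity of `Δ_A` shows that `η_A ⊗ η_A` is invariant under exchanging its two `A`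
factors. Put `f` on the first `A` and contract the first `Aᘁ` against the second `A`. Without the
exchange the zig-zag identity returns the name `η_A ≫ (f ⊗ 𝟙)` of `f`; after the exchange the
contraction closes a loop through `f`, giving `Tr(f) ≫ η_A`. A morphism is determined by its
name, so `f = Tr(f) • 𝟙_A`.
-/

section Monoidal

variable {C : Type u} [Category.{v} C] [MonoidalCategory C]

theorem tensorHom_comp_leftUnitor_hom {X : C} (s : 𝟙_ C ⟶ 𝟙_ C) (g : 𝟙_ C ⟶ X) :
    (s ⊗ₘ g) ≫ (λ_ X).hom = (λ_ (𝟙_ C)).hom ≫ s ≫ g := by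
  rw [MonoidalCategory.tensorHom_def, Category.assoc, leftUnitor_naturality, unitors_equal,
    rightUnitor_naturality_assoc]

theorem comp_scalarSmul_id {Z : C} (s : 𝟙_ C ⟶ 𝟙_ C) (x : 𝟙_ C ⟶ Z) :
    x ≫ scalarSmul s (𝟙 Z) = s ≫ x := by
  rw [scalarSmul, Category.comp_id, leftUnitor_inv_naturality_assoc, ← id_tensorHom,
    tensorHom_comp_tensorHom_assoc, Category.id_comp, Category.comp_id,
    tensorHom_comp_leftUnitor_hom, Iso.inv_hom_id_assoc]

theorem scalarSmul_id_tensorHom_id (s : 𝟙_ C ⟶ 𝟙_ C) (X Y : C) :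
    scalarSmul s (𝟙 X) ⊗ₘ 𝟙 Y = scalarSmul s (𝟙 (X ⊗ Y)) := by
  simp [scalarSmul]

def contract {X Y : C} (e : Y ⊗ X ⟶ 𝟙_ C) : (X ⊗ Y) ⊗ (X ⊗ Y) ⟶ X ⊗ Y :=
  (α_ X Y (X ⊗ Y)).hom ≫ X ◁ ((α_ Y X Y).inv ≫ (e ▷ Y) ≫ (λ_ Y).hom)

theorem coevaluation_tensorHom_comp_contract {X Y : C} [ExactPairing X Y] (g : 𝟙_ C ⟶ X ⊗ Y) :
    (η_ X Y ⊗ₘ g) ≫ contract (ε_ X Y) = (λ_ (𝟙_ C)).hom ≫ g := by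
  have zigzag : η_ X Y ▷ (X ⊗ Y) ≫ contract (ε_ X Y) = (λ_ (X ⊗ Y)).hom := by
    calc _ = 𝟙 _ ⊗≫ (η_ X Y ▷ X ⊗≫ X ◁ ε_ X Y) ▷ Y ⊗≫ 𝟙 _ := by
          simp only [contract]; monoidal
      _ = _ := by rw [ExactPairing.evaluation_coevaluation'']; monoidal
  rw [tensorHom_def', Category.assoc, zigzag, leftUnitor_naturality]

theorem coevaluation_comp_tensorHom_id_injective {X Y Z : C} [ExactPairing X Y] {f g : X ⟶ Z}
    (h : η_ X Y ≫ (f ⊗ₘ 𝟙 Y) = η_ X Y ≫ (g ⊗ₘ 𝟙 Y)) : f = g := by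
  have name : ∀ f : X ⟶ Z,
      tensorRightHomEquiv (𝟙_ C) X Y Z ((λ_ X).hom ≫ f) = η_ X Y ≫ (f ⊗ₘ 𝟙 Y) := by
    intro f
    simp only [tensorRightHomEquiv, Equiv.coe_fn_mk]
    monoidal
  rw [← name, ← name, Equiv.apply_eq_iff_eq, cancel_epi] at h
  exact h

end Monoidal

section Braided

variable {C : Type u} [Category.{v} C] [MonoidalCategory C] [BraidedCategory C]

theorem tensorδ_natural {X₁ X₂ Y₁ Y₂ U₁ U₂ V₁ V₂ : C} (f₁ : X₁ ⟶ Y₁) (f₂ : X₂ ⟶ Y₂)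
    (g₁ : U₁ ⟶ V₁) (g₂ : U₂ ⟶ V₂) :
    ((f₁ ⊗ₘ g₁) ⊗ₘ f₂ ⊗ₘ g₂) ≫ tensorδ Y₁ Y₂ V₁ V₂ =
      tensorδ X₁ X₂ U₁ U₂ ≫ ((f₁ ⊗ₘ f₂) ⊗ₘ g₁ ⊗ₘ g₂) := by
  calc _ = tensorδ X₁ X₂ U₁ U₂ ≫ tensorμ X₁ X₂ U₁ U₂ ≫ ((f₁ ⊗ₘ g₁) ⊗ₘ f₂ ⊗ₘ g₂) ≫
        tensorδ Y₁ Y₂ V₁ V₂ := by rw [tensorδ_tensorμ_assoc]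
    _ = _ := by rw [← tensorμ_natural_assoc, tensorμ_tensorδ, Category.comp_id]

def swapLeft (X Y : C) : (X ⊗ Y) ⊗ (X ⊗ Y) ⟶ (X ⊗ Y) ⊗ (X ⊗ Y) :=
  tensorδ X X Y Y ≫ ((β_ X X).hom ▷ (Y ⊗ Y)) ≫ tensorμ X X Y Y

theorem swapLeft_natural {X X' Y Y' : C} (f g : X ⟶ X') (h k : Y ⟶ Y') :
    ((f ⊗ₘ h) ⊗ₘ g ⊗ₘ k) ≫ swapLeft X' Y' = swapLeft X Y ≫ ((g ⊗ₘ h) ⊗ₘ f ⊗ₘ k) := by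
  have braid : ((f ⊗ₘ g) ⊗ₘ h ⊗ₘ k) ≫ ((β_ X' X').hom ▷ (Y' ⊗ Y')) =
      ((β_ X X).hom ▷ (Y ⊗ Y)) ≫ ((g ⊗ₘ f) ⊗ₘ h ⊗ₘ k) := by
    rw [← tensorHom_id, ← tensorHom_id, tensorHom_comp_tensorHom, tensorHom_comp_tensorHom,
      BraidedCategory.braiding_naturality, Category.comp_id, Category.id_comp]
  simp only [swapLeft, Category.assoc, reassoc_of% tensorδ_natural, reassoc_of% braid,
    tensorμ_natural]

theorem whiskerRight_comp_leftUnitor_hom_eq_braiding {X Z : C} (g : X ⟶ 𝟙_ C) :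
    g ▷ Z ≫ (λ_ Z).hom = (β_ X Z).hom ≫ Z ◁ g ≫ (ρ_ Z).hom := by
  rw [← BraidedCategory.braiding_naturality_left_assoc, braiding_tensorUnit_left]
  simp

end Braided

section Symmetric

variable {C : Type u} [Category.{v} C] [MonoidalCategory C] [SymmetricCategory C]

theorem tensorμ_comp_whiskerRight_comp_leftUnitor {X X' Y Y' : C} (g : X ⊗ Y ⟶ 𝟙_ C) :
    tensorμ X X' Y Y' ≫ (g ▷ (X' ⊗ Y')) ≫ (λ_ (X' ⊗ Y')).hom =
      ((β_ X X').hom ▷ (Y ⊗ Y')) ≫ (α_ X' X (Y ⊗ Y')).hom ≫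
        X' ◁ ((α_ X Y Y').inv ≫ (g ▷ Y') ≫ (λ_ Y').hom) := by
  calc _ = 𝟙 _ ⊗≫ (X ◁ (β_ X' Y).hom ⊗≫ (g ▷ X' ≫ (λ_ X').hom)) ▷ Y' ⊗≫ 𝟙 _ := by
        simp only [tensorμ]; monoidal
    _ = 𝟙 _ ⊗≫ (X ◁ ((β_ X' Y).hom ≫ (β_ Y X').hom) ⊗≫ (β_ X X').hom ▷ Y ⊗≫
          X' ◁ g ≫ (ρ_ X').hom) ▷ Y' ⊗≫ 𝟙 _ := by
        rw [whiskerRight_comp_leftUnitor_hom_eq_braiding, BraidedCategory.braiding_tensor_left_hom]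
        monoidal
    _ = _ := by
        rw [SymmetricCategory.symmetry]; monoidal

theorem swapLeft_comp_contract {X Y : C} (e : Y ⊗ X ⟶ 𝟙_ C) :
    swapLeft X Y ≫ contract e = (((β_ X Y).hom ≫ e) ▷ (X ⊗ Y)) ≫ (λ_ (X ⊗ Y)).hom := by
  have unfold : tensorμ X X Y Y ≫ contract e = (α_ X X (Y ⊗ Y)).hom ≫
      X ◁ ((α_ X Y Y).inv ≫ (((β_ X Y).hom ≫ e) ▷ Y) ≫ (λ_ Y).hom) := by
    simp only [tensorμ, contract]; monoidal
  rw [swapLeft, Category.assoc, Category.assoc, unfold,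
    ← tensorμ_comp_whiskerRight_comp_leftUnitor, tensorδ_tensorμ_assoc]

end Symmetric

namespace UniformCloning

section

variable {C : Type u} [Category.{v} C] [MonoidalCategory C] [SymmetricCategory C]

theorem tensorHom_self_eq (cl : UniformCloning C) {X : C} (x : 𝟙_ C ⟶ X) :
    x ⊗ₘ x = (λ_ (𝟙_ C)).hom ≫ x ≫ cl.Δ X := by
  rw [cl.naturality, cl.unit, Iso.hom_inv_id_assoc]

theorem Δ_tensor_comp_swapLeft (cl : UniformCloning C) (X Y : C) :
    cl.Δ (X ⊗ Y) ≫ swapLeft X Y = cl.Δ (X ⊗ Y) := by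
  rw [cl.tensor, swapLeft, Category.assoc, tensorμ_tensorδ_assoc, ← tensorHom_id,
    tensorHom_comp_tensorHom_assoc, cl.cocomm, Category.comp_id]

theorem tensorHom_self_comp_swapLeft (cl : UniformCloning C) {X Y : C} (x : 𝟙_ C ⟶ X ⊗ Y) :
    (x ⊗ₘ x) ≫ swapLeft X Y = x ⊗ₘ x := by
  rw [cl.tensorHom_self_eq, Category.assoc, Category.assoc, cl.Δ_tensor_comp_swapLeft]

theorem comp_tensorHom_self_comp_swapLeft (cl : UniformCloning C) {X Y : C} (x : 𝟙_ C ⟶ X ⊗ Y)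
    (f : X ⟶ X) :
    ((x ≫ (f ⊗ₘ 𝟙 Y)) ⊗ₘ x) ≫ swapLeft X Y = x ⊗ₘ (x ≫ (f ⊗ₘ 𝟙 Y)) := by
  have split : (x ≫ (f ⊗ₘ 𝟙 Y)) ⊗ₘ x = (x ⊗ₘ x) ≫ ((f ⊗ₘ 𝟙 Y) ⊗ₘ 𝟙 X ⊗ₘ 𝟙 Y) := by
    rw [tensorHom_comp_tensorHom, id_tensorHom_id, Category.comp_id]
  rw [split, Category.assoc, swapLeft_natural, reassoc_of% (cl.tensorHom_self_comp_swapLeft x),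
    tensorHom_comp_tensorHom, id_tensorHom_id, Category.comp_id]

end

theorem coevaluation_comp_tensorHom_id_eq_catTrace (cl : UniformCloning C) {A : C} (f : A ⟶ A) :
    η_ A Aᘁ ≫ (f ⊗ₘ 𝟙 Aᘁ) = catTrace f ≫ η_ A Aᘁ := by
  set n := η_ A Aᘁ ≫ (f ⊗ₘ 𝟙 Aᘁ)
  rw [← cancel_epi (λ_ (𝟙_ C)).hom]
  calc (λ_ (𝟙_ C)).hom ≫ n = (η_ A Aᘁ ⊗ₘ n) ≫ contract (ε_ A Aᘁ) :=
        (coevaluation_tensorHom_comp_contract n).symm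
    _ = (n ⊗ₘ η_ A Aᘁ) ≫ swapLeft A Aᘁ ≫ contract (ε_ A Aᘁ) := by
        rw [reassoc_of% (cl.comp_tensorHom_self_comp_swapLeft (η_ A Aᘁ) f)]
    _ = (catTrace f ⊗ₘ η_ A Aᘁ) ≫ (λ_ (A ⊗ Aᘁ)).hom := by
        rw [swapLeft_comp_contract, ← Category.assoc, ← tensorHom_id, tensorHom_comp_tensorHom,
          Category.comp_id]
        simp only [n, catTrace, Category.assoc]
    _ = (λ_ (𝟙_ C)).hom ≫ catTrace f ≫ η_ A Aᘁ := tensorHom_comp_leftUnitor_hom _ _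

end UniformCloning

/-- **Cloning Collapse Theorem.** In a compact closed category with uniform
cloning, every endomorphism is a scalar multiple of the identity:
`f = Tr(f) • 𝟙_A`.  Consequently the composite
`C(A,A) ⟶ C(I,I) ⟶ C(A,A)`, `f ↦ Tr(f) ↦ Tr(f) • 𝟙_A`, is the identity on
`C(A,A)`, exhibiting `C(A,A)` as a retract of the scalar monoid `C(I,I)`. -/
theorem cloning_collapse (cloning : UniformCloning C) {A : C} (f : A ⟶ A) :
    f = scalarSmul (catTrace f) (𝟙 A) := by
  apply coevaluation_comp_tensorHom_id_injective (Y := Aᘁ)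
  rw [cloning.coevaluation_comp_tensorHom_id_eq_catTrace, scalarSmul_id_tensorHom_id,
    comp_scalarSmul_id]
end

section
/- Let C be a compact closed category with uniform deleting, i.e. a monoidal natural transformation d from the identity functor to the constant functor at the tensor unit I, with components d_A : A ⟶ I satisfying naturality (f ≫ d_B = d_A for every f : A ⟶ B), d_I = 𝟙_I, and d_{A⊗B} = (d_A ⊗ d_B) ≫ λ_I (equivalently, modulo the unitor, d_{A⊗B} = d_A ⊗ d_B followed by the canonical isomorphism I ⊗ I ≅ I). Then C is a preorder: for all objects A, B and all f, g : A ⟶ B, f = g. (No-Deleting) -/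
/-!
Naturality of `d` at a morphism `h : Y ⟶ 𝟙_ C` together with `d (𝟙_ C) = 𝟙` forces `h = d Y`, so
the tensor unit is terminal. Compact closure transposes every morphism `A ⟶ B` to a morphism
`Bᘁ ⊗ A ⟶ 𝟙_ C`, bijectively, so all hom-sets have at most one element.
-/

open CategoryTheory MonoidalCategory Limits

universe v u

namespace CategoryTheory

def isTerminalOfNatural {C : Type u} [Category.{v} C] {T : C} (d : ∀ A : C, A ⟶ T)
    (d_nat : ∀ {A B : C} (f : A ⟶ B), f ≫ d B = d A) (d_self : d T = 𝟙 T) : IsTerminal T :=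
  IsTerminal.ofUniqueHom d fun A h => by rw [← d_nat h, d_self, Category.comp_id]

section Duality

variable {C : Type u} [Category.{v} C] [MonoidalCategory C]

def homEquivDualTensorHomUnit (A B : C) [HasRightDual B] : (A ⟶ B) ≃ (Bᘁ ⊗ A ⟶ 𝟙_ C) :=
  ((Iso.refl A).homCongr (ρ_ B).symm).trans (tensorLeftHomEquiv A B Bᘁ (𝟙_ C)).symm

theorem subsingleton_hom_of_isTerminal_unit (t : IsTerminal (𝟙_ C)) (A B : C) [HasRightDual B] :
    Subsingleton (A ⟶ B) :=
  (homEquivDualTensorHomUnit A B).subsingleton_congr.mpr ⟨t.hom_ext⟩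

end Duality

end CategoryTheory

theorem no_deleting_general (C : Type u) [Category.{v} C] [MonoidalCategory C]
    [RightRigidCategory C]
    (d : ∀ A : C, A ⟶ 𝟙_ C)
    (d_nat : ∀ {A B : C} (f : A ⟶ B), f ≫ d B = d A)
    (d_unit : d (𝟙_ C) = 𝟙 (𝟙_ C))
    {A B : C} (f g : A ⟶ B) : f = g :=
  have unit_terminal : IsTerminal (𝟙_ C) := isTerminalOfNatural d d_nat d_unit
  (subsingleton_hom_of_isTerminal_unit unit_terminal A B).elim f g

/-- **No-Deleting.** A compact closed category (a symmetric monoidal category in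
which every object has a right dual with coevaluation and evaluation satisfying
the triangle identities) with a uniform deleting operation — a monoidal natural
transformation `d` from the identity functor to the constant functor at the
tensor unit, i.e. components `d_A : A ⟶ I` with `f ≫ d_B = d_A` for every
`f : A ⟶ B`, `d_I = 𝟙_I` and `d_{A⊗B} = (d_A ⊗ d_B) ≫ λ_I` — is a preorder:
any two parallel morphisms are equal. -/
theorem no_deleting (C : Type u) [Category.{v} C] [MonoidalCategory C]
    [SymmetricCategory C] [RightRigidCategory C]
    (d : ∀ A : C, A ⟶ 𝟙_ C)
    (d_nat : ∀ {A B : C} (f : A ⟶ B), f ≫ d B = d A)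
    (d_unit : d (𝟙_ C) = 𝟙 (𝟙_ C))
    (d_tensor : ∀ A B : C, d (A ⊗ B) = (d A ⊗ₘ d B) ≫ (λ_ (𝟙_ C)).hom)
    {A B : C} (f g : A ⟶ B) : f = g :=
  no_deleting_general C d d_nat d_unit f g
end
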